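/- arXiv:1906.02895 — 5 statements merged into one kernel-verified Lean document; each statement's English description precedes it below -/
import Mathlib

section
/- Let G be a finite simple graph with at least one edge. Then Eρ(G) < cd(G) ≤ (3/2)·mr(F₂,G) ≤ (3/2)·nd(G) ≤ (3/2)·2^{cd(G)}. -/
open scoped Classical

namespace AvgCutRank

variable {V : Type*} {W : Type*}

/-- Local complementation of `G` at a vertex `v`: complement the adjacency inside
the neighborhood of `v`. -/
def localComp (G : SimpleGraph V) (v : V) : SimpleGraph V where
  Adj x y := x ≠ y ∧ (G.Adj x y ↔ ¬(G.Adj v x ∧ G.Adj v y))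
  symm := ⟨by
    rintro x y ⟨hxy, h⟩
    refine ⟨hxy.symm, ?_⟩
    rw [G.adj_comm y x, and_comm]
    exact h⟩
  loopless := ⟨fun x h => h.1 rfl⟩

/-- Two graphs on the same vertex set are locally equivalent if one is obtained from
the other by a sequence of local complementations. -/
def LocallyEquivalent (G H : SimpleGraph V) : Prop :=
  Relation.ReflTransGen (fun A B => ∃ v, B = localComp A v) G H

/-- `H` is (isomorphic to) a vertex-minor of `G`: `H` is isomorphic to an induced
subgraph of a graph locally equivalent to `G`. -/
def IsVertexMinor (H : SimpleGraph W) (G : SimpleGraph V) : Prop :=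
  ∃ (G' : SimpleGraph V) (s : Set V), LocallyEquivalent G G' ∧ Nonempty (H ≃g G'.induce s)

/-- The cut-rank of a set `X` of vertices: the rank over GF(2) of the `X × Xᶜ`
adjacency submatrix. -/
noncomputable def cutRank [Fintype V] [DecidableEq V] (G : SimpleGraph V)
    (X : Finset V) : ℕ :=
  (Matrix.of fun (i : X) (j : (Xᶜ : Finset V)) =>
    if G.Adj i.1 j.1 then (1 : ZMod 2) else 0).rank

/-- The average cut-rank of a graph. -/
noncomputable def avgCutRank [Fintype V] [DecidableEq V] (G : SimpleGraph V) : ℝ :=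
  (∑ X : Finset V, (cutRank G X : ℝ)) / 2 ^ Fintype.card V

/-- The maximum cut-rank of a graph. -/
noncomputable def maxCutRank [Fintype V] [DecidableEq V] (G : SimpleGraph V) : ℕ :=
  Finset.univ.sup (cutRank G)

/-- `x` and `y` are equal or twins: they have the same neighbors outside `{x, y}`. -/
def TwinEq (G : SimpleGraph V) (x y : V) : Prop :=
  x = y ∨ ∀ z, z ≠ x → z ≠ y → (G.Adj x z ↔ G.Adj y z)

/-- `x` and `y` are twins. -/
def IsTwins (G : SimpleGraph V) (x y : V) : Prop :=
  x ≠ y ∧ ∀ z, z ≠ x → z ≠ y → (G.Adj x z ↔ G.Adj y z)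

/-- Neighborhood diversity: the number of twin classes. -/
noncomputable def nd [Fintype V] [DecidableEq V] (G : SimpleGraph V) : ℕ :=
  (Finset.univ.image fun x => Finset.univ.filter fun y => TwinEq G x y).card

/-- The minimum rank of a graph over a field `F`. -/
noncomputable def minRank (F : Type*) [Field F] [Fintype V] [DecidableEq V]
    (G : SimpleGraph V) : ℕ :=
  sInf { r : ℕ | ∃ A : Matrix V V F, A.IsSymm ∧
    (∀ i j, i ≠ j → (A i j ≠ 0 ↔ G.Adj i j)) ∧ A.rank = r }

/-- The clique delta-cover number: the minimum `t` such that the edge set of `G` is the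
symmetric difference of the edge sets of `t` complete graphs (given by their vertex sets). -/
noncomputable def cliqueDeltaCover [Fintype V] [DecidableEq V] (G : SimpleGraph V) : ℕ :=
  sInf { t : ℕ | ∃ S : Fin t → Finset V, ∀ x y : V, x ≠ y →
    (G.Adj x y ↔ Odd (Finset.univ.filter fun i => x ∈ S i ∧ y ∈ S i).card) }

/-- `C` is the vertex set of an attached star in `G`: the subgraph induced on `C` is a
star (with center `c`) all of whose noncentral vertices are leaves of `G`. -/
def IsAttachedStar (G : SimpleGraph V) (C : Set V) : Prop :=
  ∃ c ∈ C, (∃ x ∈ C, x ≠ c) ∧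
    ∀ x ∈ C, x ≠ c → G.Adj c x ∧ ∀ y, G.Adj x y → y = c

/-- Deletion of a vertex: the induced subgraph on the complement of `{v}`. -/
def deleteVert (G : SimpleGraph V) (v : V) : SimpleGraph {w : V // w ≠ v} :=
  SimpleGraph.comap Subtype.val G

/-- Deletion of a finite set of vertices. -/
def deleteVerts (G : SimpleGraph V) (T : Finset V) : SimpleGraph {w : V // w ∉ T} :=
  SimpleGraph.comap Subtype.val G

/-- The star `K_{1,m}` with center `0`. -/
def starGraph (m : ℕ) : SimpleGraph (Fin (m + 1)) :=
  SimpleGraph.fromRel fun x _ => x = 0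

/-- The disjoint union of three copies of `K₂`. -/
def threeK2 : SimpleGraph (Fin 6) :=
  SimpleGraph.fromRel fun x y =>
    (x = 0 ∧ y = 1) ∨ (x = 2 ∧ y = 3) ∨ (x = 4 ∧ y = 5)

/-- The disjoint union of two paths on three vertices. -/
def twoP3 : SimpleGraph (Fin 6) :=
  SimpleGraph.fromRel fun x y =>
    (x = 0 ∧ y = 1) ∨ (x = 1 ∧ y = 2) ∨ (x = 3 ∧ y = 4) ∨ (x = 4 ∧ y = 5)

/-- The disjoint union of `K₂` and the star `K_{1,k+1}`. -/
def K2PlusStar (k : ℕ) : SimpleGraph (Fin (k + 4)) :=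
  SimpleGraph.fromRel fun x y => (x.val = 0 ∧ y.val = 1) ∨ (x.val = 2 ∧ 3 ≤ y.val)

/-- `E_k`: the star `K_{1,k+1}` with one edge subdivided. Vertex `0` is the center,
`1` is the subdivision vertex, `2` is the leaf behind it, `3, …, k+2` are leaves. -/
def Egraph (k : ℕ) : SimpleGraph (Fin (k + 3)) :=
  SimpleGraph.fromRel fun x y =>
    (x.val = 0 ∧ y.val = 1) ∨ (x.val = 1 ∧ y.val = 2) ∨ (x.val = 0 ∧ 3 ≤ y.val)

/-- Finite graphs represented on the vertex sets `Fin n`. -/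
abbrev GraphOn := Σ n : ℕ, SimpleGraph (Fin n)

/-- `H` is isomorphic to an induced subgraph of `G`. -/
def IsIndSubgraph (H G : GraphOn) : Prop :=
  ∃ s : Set (Fin G.1), Nonempty (H.2 ≃g G.2.induce s)

/-- The sequence `x_n(ε)` from the paper. -/
noncomputable def xseq (ε : ℝ) : ℕ → ℤ
  | 0 => max ⌊2 - Real.logb 2 (1 - ε)⌋ 5
  | n + 1 => 2 ^ (8 * (n + 1) + 10) *
      ⌊(xseq ε n : ℝ) - Real.logb 2 (1 - Int.fract ((2 : ℝ) ^ (xseq ε n) * ε / 2)) + 1⌋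


/-!
A clique delta-cover by `t` cliques is the same thing as a `V × t` matrix `M` over GF(2) with
`A_G = M Mᵀ` off the diagonal. Every cut matrix of `G` is then a submatrix of `M Mᵀ`, so all
cut-ranks are at most `t`, while the cut-rank of `∅` is `0` and `t ≥ 1` as `G` has an edge; this
gives `Eρ(G) < cd(G)`. Vertices with equal rows of `M` are twins, so `nd(G) ≤ 2^t`.

For `cd(G) ≤ (3/2)·mr(F₂,G)`, peel a symmetric GF(2) matrix by Gaussian elimination. A nonzero
diagonal pivot removes a square `v vᵀ` and lowers the rank by one. If the diagonal vanishes, an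
off-diagonal pivot removes `u vᵀ + v uᵀ`, which off the diagonal equals
`u uᵀ + v vᵀ + (u + v)(u + v)ᵀ`, and lowers the rank by two. So `3r/2` squares suffice for
rank `r`. Finally `mr(F₂,G) ≤ nd(G)`: adjacency between distinct vertices depends only on their
twin classes, so a suitable choice of diagonal gives a matrix whose rows are constant on twin
classes.
-/

end AvgCutRank

open Finset Matrix Module

namespace Matrix

variable {m n K : Type*} [Fintype n] [Field K]

theorem rank_add_finrank_ker (A : Matrix m n K) :
    A.rank + finrank K (LinearMap.ker A.mulVecLin) = Fintype.card n := by
  rw [rank, LinearMap.finrank_range_add_finrank_ker, Module.finrank_fintype_fun_eq_card]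

theorem rank_lt_rank_of_ker_lt {A B : Matrix m n K}
    (h : LinearMap.ker A.mulVecLin < LinearMap.ker B.mulVecLin) : B.rank < A.rank := by
  have := Submodule.finrank_lt_finrank_of_lt h
  have := A.rank_add_finrank_ker
  have := B.rank_add_finrank_ker
  omega

theorem rank_sub_pivot_lt [DecidableEq n] (A : Matrix m n K) {i : m} {j : n} (h : A i j ≠ 0) :
    (A - (A i j)⁻¹ • vecMulVec (A.col j) (A.row i)).rank < A.rank := by
  refine rank_lt_rank_of_ker_lt (SetLike.lt_iff_le_and_exists.2
    ⟨fun v hv => ?_, Pi.single j 1, ?_, fun hj => h ?_⟩)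
  · have hi : A.row i ⬝ᵥ v = 0 := congrFun (LinearMap.mem_ker.1 hv) i
    simp_all [vecMulVec_mulVec]
  · ext x
    simp [vecMulVec_apply, mul_left_comm _ (A x j), inv_mul_cancel₀ h]
  · simpa using congrFun (LinearMap.mem_ker.1 hj) i

theorem rank_sub_two_pivots_add_two_le [DecidableEq n] (A : Matrix n n K) {i j : n}
    (hii : A i i = 0) (hjj : A j j = 0) (hij : A i j ≠ 0) (hji : A j i ≠ 0) :
    (A - (A i j)⁻¹ • vecMulVec (A.col j) (A.row i)
      - (A j i)⁻¹ • vecMulVec (A.col i) (A.row j)).rank + 2 ≤ A.rank := by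
  set B := A - (A i j)⁻¹ • vecMulVec (A.col j) (A.row i)
  have hBji : B j i = A j i := by simp [B, vecMulVec_apply, hii]
  have hBcol : B.col i = A.col i := by ext x; simp [B, vecMulVec_apply, hii]
  have hBrow : B.row j = A.row j := by ext y; simp [B, vecMulVec_apply, hjj]
  have h1 : B.rank < A.rank := A.rank_sub_pivot_lt hij
  have h2 := B.rank_sub_pivot_lt (hBji ▸ hji)
  rw [hBji, hBcol, hBrow] at h2
  omega

theorem rank_le_card_image_row [Fintype m] [DecidableEq (n → K)] (A : Matrix m n K) :
    A.rank ≤ #(univ.image A.row) := by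
  rw [rank_eq_finrank_span_row, ← Set.image_univ, ← coe_univ, ← coe_image]
  exact finrank_span_finset_le_card _

theorem IsSymm.exists_offDiag_eq_mul_transpose [DecidableEq n] {A : Matrix n n (ZMod 2)}
    (hA : A.IsSymm) :
    ∃ (t : ℕ) (W : Matrix n (Fin t) (ZMod 2)), 2 * t ≤ 3 * A.rank ∧
      ∀ x y, x ≠ y → A x y = (W * Wᵀ) x y := by
  induction hr : A.rank using Nat.strong_induction_on generalizing A with | _ r ih =>
  have hcol : ∀ k, A.col k = A.row k := fun k => congrFun hA k
  by_cases hoff : ∀ x y, x ≠ y → A x y = 0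
  · exact ⟨0, 0, by omega, fun x y hxy => by simp [hoff x y hxy]⟩
  by_cases hdiag : ∃ k, A k k ≠ 0
  · obtain ⟨k, hk⟩ := hdiag
    have hk1 : A k k = 1 := Fin.eq_one_of_ne_zero _ hk
    set B := A - vecMulVec (A.row k) (A.row k)
    have hB : B.rank < A.rank := by simpa [B, hk1, hcol] using A.rank_sub_pivot_lt hk
    obtain ⟨t, W, ht, hW⟩ := ih B.rank (hr ▸ hB) (hA.sub (transpose_vecMulVec _ _)) rfl
    refine ⟨t + 1, of fun x => Fin.cons (A k x) (W x), by omega, fun x y hxy => ?_⟩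
    have := hW x y hxy
    simp only [mul_apply, transpose_apply, of_apply, Fin.sum_univ_succ, Fin.cons_zero,
      Fin.cons_succ, sub_apply, vecMulVec_apply, row_apply] at this ⊢
    rw [← this]
    ring
  · push Not at hoff hdiag
    obtain ⟨i, j, hij, hAij⟩ := hoff
    have hAji : A j i ≠ 0 := hA.apply i j ▸ hAij
    have hAij1 : A i j = 1 := Fin.eq_one_of_ne_zero _ hAij
    have hAji1 : A j i = 1 := Fin.eq_one_of_ne_zero _ hAji
    set B := A - vecMulVec (A.row j) (A.row i) - vecMulVec (A.row i) (A.row j)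
    have hB : B.rank + 2 ≤ A.rank := by
      simpa [B, hAij1, hAji1, hcol] using
        A.rank_sub_two_pivots_add_two_le (hdiag i) (hdiag j) hAij hAji
    have hBsymm : B.IsSymm := IsSymm.ext fun x y => by
      simp only [B, sub_apply, vecMulVec_apply, row_apply, hA.apply x y]
      ring
    obtain ⟨t, W, ht, hW⟩ := ih B.rank (by omega) hBsymm rfl
    refine ⟨t + 3, of fun x => Fin.cons (A i x) (Fin.cons (A j x)
      (Fin.cons (A i x + A j x) (W x))), by omega, fun x y hxy => ?_⟩
    have := hW x y hxy
    simp only [B, mul_apply, transpose_apply, of_apply, Fin.sum_univ_succ, Fin.cons_zero,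
      Fin.cons_succ, sub_apply, vecMulVec_apply, row_apply] at this ⊢
    rw [← this]
    ring_nf
    reduce_mod_char

end Matrix

namespace Finset

theorem card_image_le_card_image_of_factors {α β γ : Type*} [DecidableEq β]
    [DecidableEq γ] (s : Finset α) {f : α → β} {g : α → γ}
    (h : ∀ x ∈ s, ∀ y ∈ s, g x = g y → f x = f y) : #(s.image f) ≤ #(s.image g) := by
  set p := s.image fun x => (g x, f x)
  have hinj : Set.InjOn Prod.fst (p : Set (γ × β)) := by
    simp only [p, coe_image, Set.InjOn, Set.forall_mem_image]
    intro x hx y hy hxy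
    rw [h x hx y hy hxy, ← hxy]
  calc #(s.image f) = #(p.image Prod.snd) := by rw [image_image]; rfl
    _ ≤ #p := card_image_le
    _ = #(p.image Prod.fst) := (card_image_of_injOn hinj).symm
    _ = #(s.image g) := by rw [image_image]; rfl

end Finset

theorem ZMod.ite_eq_natCast_iff_odd (P : Prop) [Decidable P] (c : ℕ) :
    ((if P then 1 else 0 : ZMod 2) = c) ↔ (P ↔ Odd c) := by
  rcases Nat.even_or_odd c with hc | hc
  · rw [(ZMod.natCast_eq_zero_iff_even).2 hc]
    by_cases hP : P <;> simp [hP, Nat.not_odd_iff_even.2 hc]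
  · rw [(ZMod.natCast_eq_one_iff_odd).2 hc]
    by_cases hP : P <;> simp [hP, hc]

namespace AvgCutRank

open SimpleGraph

section Twins

variable {V : Type*} {G : SimpleGraph V} {x x' y y' z : V}

theorem TwinEq.symm (h : TwinEq G x y) : TwinEq G y x :=
  h.imp Eq.symm fun h z hzy hzx => (h z hzx hzy).symm

theorem TwinEq.adj_iff_of_ne (h : TwinEq G x x') (hx : z ≠ x) (hx' : z ≠ x') :
    G.Adj x z ↔ G.Adj x' z := by
  rcases h with rfl | h
  · rfl
  · exact h z hx hx'

theorem TwinEq.trans (hxy : TwinEq G x y) (hyz : TwinEq G y z) : TwinEq G x z := by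
  by_cases hxy' : x = y
  · exact hxy' ▸ hyz
  by_cases hyz' : y = z
  · exact hyz' ▸ hxy
  by_cases hxz : x = z
  · exact Or.inl hxz
  refine Or.inr fun w hwx hwz => ?_
  by_cases hwy : w = y
  · subst hwy
    rw [G.adj_comm x, G.adj_comm z, hyz.adj_iff_of_ne hxy' hxz, G.adj_comm,
      hxy.adj_iff_of_ne (Ne.symm hxz) (Ne.symm hyz')]
  · exact (hxy.adj_iff_of_ne hwx hwy).trans (hyz.adj_iff_of_ne hwy hwz)

theorem TwinEq.adj_iff (hx : TwinEq G x x') (hy : TwinEq G y y') (hxy : x ≠ y)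
    (hxy' : x' ≠ y') : G.Adj x y ↔ G.Adj x' y' := by
  by_cases hx'y : x' = y
  · subst hx'y
    by_cases hxy'' : x = y'
    · subst hxy''
      exact G.adj_comm _ _
    · rw [G.adj_comm, hy.adj_iff_of_ne hxy hxy'', G.adj_comm,
        hx.adj_iff_of_ne (Ne.symm hxy'') (Ne.symm hxy')]
  · rw [hx.adj_iff_of_ne (Ne.symm hxy) (Ne.symm hx'y), G.adj_comm,
      hy.adj_iff_of_ne hx'y hxy', G.adj_comm]

variable [Fintype V]

variable (G) in
noncomputable def twinClass (x : V) : Finset V :=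
  univ.filter fun y => TwinEq G x y

theorem mem_twinClass : y ∈ twinClass G x ↔ TwinEq G x y := by
  simp [twinClass]

theorem twinClass_eq_twinClass_iff : twinClass G x = twinClass G y ↔ TwinEq G x y := by
  refine ⟨fun h => mem_twinClass.1 (h ▸ mem_twinClass.2 (Or.inl rfl)), fun h => ?_⟩
  ext z
  simp only [mem_twinClass]
  exact ⟨h.symm.trans, h.trans⟩

variable [DecidableEq V]

theorem minRank_le_nd (F : Type*) [Field F] : minRank F G ≤ nd G := by
  let P : Finset V → Finset V → Prop := fun C D => ∃ x ∈ C, ∃ y ∈ D, x ≠ y ∧ G.Adj x y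
  have hPswap : ∀ {C D}, P C D → P D C := fun ⟨x, hx, y, hy, hxy, h⟩ =>
    ⟨y, hy, x, hx, hxy.symm, h.symm⟩
  have hPadj : ∀ x y, x ≠ y → (P (twinClass G x) (twinClass G y) ↔ G.Adj x y) :=
    fun x y hxy => ⟨fun ⟨x', hx', y', hy', hne, h⟩ =>
      ((mem_twinClass.1 hx').adj_iff (mem_twinClass.1 hy') hxy hne).2 h,
      fun h => ⟨x, mem_twinClass.2 (Or.inl rfl), y, mem_twinClass.2 (Or.inl rfl), hxy, h⟩⟩
  let A : Matrix V V F := of fun x y => if P (twinClass G x) (twinClass G y) then 1 else 0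
  have hA : A.IsSymm := IsSymm.ext fun x y => by
    simp only [A, of_apply, show P _ _ ↔ P _ _ from ⟨hPswap, hPswap⟩]
  have hpat : ∀ x y, x ≠ y → (A x y ≠ 0 ↔ G.Adj x y) := fun x y hxy => by
    simp [A, hPadj x y hxy]
  calc minRank F G ≤ A.rank := Nat.sInf_le ⟨A, hA, hpat, rfl⟩
    _ ≤ #(univ.image A.row) := A.rank_le_card_image_row
    _ ≤ nd G := card_image_le_card_image_of_factors univ
      fun x _ y _ (h : twinClass G x = twinClass G y) => by
        ext z
        simp only [A, row, of_apply, h]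

end Twins

section CliqueDeltaCover

variable {V : Type*} {G : SimpleGraph V}

theorem adjMatrix_eq_of_ne_zero_iff_adj {A : Matrix V V (ZMod 2)}
    (hA : ∀ i j, i ≠ j → (A i j ≠ 0 ↔ G.Adj i j)) {x y : V} (hxy : x ≠ y) :
    G.adjMatrix (ZMod 2) x y = A x y := by
  by_cases h : G.Adj x y
  · have h1 : A x y = 1 := Fin.eq_one_of_ne_zero _ ((hA x y hxy).2 h)
    simp [h, h1]
  · simpa [h, eq_comm] using mt (hA x y hxy).1 h

variable {V : Type*} [DecidableEq V] {G : SimpleGraph V}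

variable (G) in
def IsCliqueDeltaCover {t : ℕ} (S : Fin t → Finset V) : Prop :=
  ∀ x y : V, x ≠ y → (G.Adj x y ↔ Odd (univ.filter fun i => x ∈ S i ∧ y ∈ S i).card)

theorem IsCliqueDeltaCover.pos {t : ℕ} {S : Fin t → Finset V} (hS : IsCliqueDeltaCover G S)
    (hE : ∃ x y, G.Adj x y) : 0 < t := by
  obtain ⟨x, y, hxy⟩ := hE
  rcases Nat.eq_zero_or_pos t with rfl | ht
  · simpa using (hS x y hxy.ne).1 hxy
  · exact ht

theorem IsCliqueDeltaCover.twinEq {t : ℕ} {S : Fin t → Finset V} (hS : IsCliqueDeltaCover G S)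
    {x y : V} (h : ∀ k, x ∈ S k ↔ y ∈ S k) : TwinEq G x y :=
  Or.inr fun z hzx hzy => by
    rw [hS x z hzx.symm, hS y z hzy.symm]
    simp only [h]

def cliqueIncidence {t : ℕ} (S : Fin t → Finset V) : Matrix V (Fin t) (ZMod 2) :=
  of fun x k => if x ∈ S k then 1 else 0

theorem cliqueIncidence_mul_transpose_apply {t : ℕ} (S : Fin t → Finset V) (x y : V) :
    (cliqueIncidence S * (cliqueIncidence S)ᵀ) x y =
      ((univ.filter fun k => x ∈ S k ∧ y ∈ S k).card : ZMod 2) := by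
  rw [mul_apply, natCast_card_filter]
  refine sum_congr rfl fun k _ => ?_
  by_cases hx : x ∈ S k <;> by_cases hy : y ∈ S k <;> simp [cliqueIncidence, hx, hy]

theorem isCliqueDeltaCover_iff {t : ℕ} {S : Fin t → Finset V} :
    IsCliqueDeltaCover G S ↔ ∀ x y, x ≠ y →
      G.adjMatrix (ZMod 2) x y = (cliqueIncidence S * (cliqueIncidence S)ᵀ) x y := by
  simp only [IsCliqueDeltaCover, adjMatrix_apply, cliqueIncidence_mul_transpose_apply,
    ZMod.ite_eq_natCast_iff_odd]

variable [Fintype V]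

theorem cliqueIncidence_filter_eq_one {t : ℕ} (W : Matrix V (Fin t) (ZMod 2)) :
    cliqueIncidence (fun k => univ.filter fun x => W x k = 1) = W := by
  ext x k
  by_cases h : W x k = 1
  · simp [cliqueIncidence, h]
  · have h0 : W x k = 0 := by_contra fun h0 => h (Fin.eq_one_of_ne_zero _ h0)
    simp [cliqueIncidence, h0]

theorem exists_isCliqueDeltaCover_of_isSymm {A : Matrix V V (ZMod 2)} (hA : A.IsSymm)
    (hpat : ∀ i j, i ≠ j → (A i j ≠ 0 ↔ G.Adj i j)) :
    ∃ (t : ℕ) (S : Fin t → Finset V), 2 * t ≤ 3 * A.rank ∧ IsCliqueDeltaCover G S := by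
  obtain ⟨t, W, ht, hW⟩ := hA.exists_offDiag_eq_mul_transpose
  refine ⟨t, fun k => univ.filter fun x => W x k = 1, ht, isCliqueDeltaCover_iff.2 ?_⟩
  intro x y hxy
  rw [cliqueIncidence_filter_eq_one, adjMatrix_eq_of_ne_zero_iff_adj hpat hxy, hW x y hxy]

theorem cliqueDeltaCover_le {t : ℕ} {S : Fin t → Finset V} (hS : IsCliqueDeltaCover G S) :
    cliqueDeltaCover G ≤ t :=
  Nat.sInf_le (s := {t | ∃ S : Fin t → Finset V, IsCliqueDeltaCover G S}) ⟨S, hS⟩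

variable (G) in
theorem exists_isSymm_rank_eq_minRank (F : Type*) [Field F] :
    ∃ A : Matrix V V F, A.IsSymm ∧ (∀ i j, i ≠ j → (A i j ≠ 0 ↔ G.Adj i j)) ∧
      A.rank = minRank F G := by
  have hne : {r | ∃ A : Matrix V V F, A.IsSymm ∧ (∀ i j, i ≠ j → (A i j ≠ 0 ↔ G.Adj i j)) ∧
      A.rank = r}.Nonempty :=
    ⟨_, G.adjMatrix F, G.isSymm_adjMatrix, fun i j _ => by simp [adjMatrix_apply], rfl⟩
  exact Nat.sInf_mem hne

variable (G) in
theorem two_mul_cliqueDeltaCover_le : 2 * cliqueDeltaCover G ≤ 3 * minRank (ZMod 2) G := by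
  obtain ⟨A, hA, hpat, hrank⟩ := exists_isSymm_rank_eq_minRank G (ZMod 2)
  obtain ⟨t, S, ht, hS⟩ := exists_isCliqueDeltaCover_of_isSymm hA hpat
  have := cliqueDeltaCover_le hS
  omega

variable (G) in
theorem exists_isCliqueDeltaCover :
    ∃ S : Fin (cliqueDeltaCover G) → Finset V, IsCliqueDeltaCover G S := by
  obtain ⟨A, hA, hpat, -⟩ := exists_isSymm_rank_eq_minRank G (ZMod 2)
  obtain ⟨t, S, -, hS⟩ := exists_isCliqueDeltaCover_of_isSymm hA hpat
  exact Nat.sInf_mem (s := {t | ∃ S : Fin t → Finset V, IsCliqueDeltaCover G S}) ⟨t, S, hS⟩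

theorem IsCliqueDeltaCover.cutRank_le {t : ℕ} {S : Fin t → Finset V}
    (hS : IsCliqueDeltaCover G S) (X : Finset V) : cutRank G X ≤ t := by
  set M := cliqueIncidence S
  have hcut : (of fun (i : X) (j : (Xᶜ : Finset V)) =>
      if G.Adj i.1 j.1 then (1 : ZMod 2) else 0) =
      M.submatrix Subtype.val id * Mᵀ.submatrix id Subtype.val := by
    ext i j
    have hij : i.1 ≠ j.1 := fun h => (mem_compl.1 j.2) (h ▸ i.2)
    rw [← submatrix_mul _ _ _ _ _ Function.bijective_id, submatrix_apply,
      ← isCliqueDeltaCover_iff.1 hS _ _ hij]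
    rfl
  rw [cutRank, hcut]
  exact (rank_mul_le_left _ _).trans ((rank_le_card_width _).trans_eq (by simp))

variable (G) in
theorem cutRank_empty : cutRank G ∅ = 0 :=
  Nat.le_zero.1 ((rank_le_card_height _).trans_eq (by simp))

theorem avgCutRank_lt_of_cutRank_le {t : ℕ} (ht : 0 < t) (h : ∀ X, cutRank G X ≤ t) :
    avgCutRank G < t := by
  rw [avgCutRank, div_lt_iff₀ (by positivity)]
  calc ∑ X, (cutRank G X : ℝ) < ∑ _X : Finset V, (t : ℝ) :=
        sum_lt_sum (fun X _ => by exact_mod_cast h X)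
          ⟨∅, mem_univ _, by simpa [cutRank_empty] using ht⟩
    _ = t * 2 ^ Fintype.card V := by simp [Fintype.card_finset, mul_comm]

theorem IsCliqueDeltaCover.nd_le {t : ℕ} {S : Fin t → Finset V} (hS : IsCliqueDeltaCover G S) :
    nd G ≤ 2 ^ t :=
  calc nd G ≤ #(univ.image fun x => univ.filter fun k => x ∈ S k) :=
        card_image_le_card_image_of_factors univ fun x _ y _ h =>
          twinClass_eq_twinClass_iff.2 (hS.twinEq fun k => by simpa using congrArg (k ∈ ·) h)
    _ ≤ Fintype.card (Finset (Fin t)) := card_le_univ _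
    _ = 2 ^ t := by simp

end CliqueDeltaCover

/-- For a graph with at least one edge,
`Eρ(G) < cd(G) ≤ (3/2)·mr(F₂,G) ≤ (3/2)·nd(G) ≤ (3/2)·2^(cd(G))`. -/
theorem stmt2 {V : Type} [Fintype V] [DecidableEq V] (G : SimpleGraph V)
    (hE : ∃ x y, G.Adj x y) :
    avgCutRank G < cliqueDeltaCover G ∧
    (cliqueDeltaCover G : ℝ) ≤ 3 / 2 * minRank (ZMod 2) G ∧
    (3 / 2 : ℝ) * minRank (ZMod 2) G ≤ 3 / 2 * nd G ∧
    (3 / 2 : ℝ) * nd G ≤ 3 / 2 * 2 ^ cliqueDeltaCover G := by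
  obtain ⟨S, hS⟩ := exists_isCliqueDeltaCover G
  have hcd : (2 * cliqueDeltaCover G : ℝ) ≤ 3 * minRank (ZMod 2) G := by
    exact_mod_cast two_mul_cliqueDeltaCover_le G
  refine ⟨avgCutRank_lt_of_cutRank_le (hS.pos hE) hS.cutRank_le, by linarith, ?_, ?_⟩
  · gcongr
    exact_mod_cast minRank_le_nd (ZMod 2)
  · gcongr
    exact_mod_cast hS.nd_le

end AvgCutRank
end

section
/- For all integers m, k ≥ 1, the average cut-rank of the complete graph K_k equals 1 − 2^{1−k}, and the average cut-rank of the complete bipartite graph K_{m,k} equals (2^m − 1)(2^k − 1)/2^{m+k−1}. In particular Eρ(K_{1,k}) = 1 − 2^{−k} = Eρ(K_{k+1}). -/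
open scoped Classical

/-! The cut matrix of a proper nonempty `X` in `K_k` is an all-ones matrix, of rank 1. In `K_{m,k}`
it is the sum of two all-ones blocks on disjoint rows and columns (left vertices of `X` against right
vertices of `Xᶜ`, and vice versa), so its rank is the number of nonempty blocks. Summing over `X`
gives the totals `2^k - 2` and `2 (2^m - 1) (2^k - 1)`. -/

namespace Matrix

variable {m n K : Type*} [Fintype n] [Field K]

theorem rank_add_le (A B : Matrix m n K) : (A + B).rank ≤ A.rank + B.rank := by
  rw [rank, rank, rank, mulVecLin_add]
  exact (Submodule.finrank_mono (LinearMap.range_add_le _ _)).trans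
    (Submodule.finrank_add_le_finrank_add_finrank _ _)

theorem card_le_rank_of_isUnit_submatrix {ι : Type*} [Fintype ι] [DecidableEq ι]
    (A : Matrix m n K) (r : ι → m) (c : ι → n) (h : IsUnit (A.submatrix r c)) :
    Fintype.card ι ≤ A.rank :=
  (rank_of_isUnit _ h).symm.trans_le (rank_submatrix_le A r c)

theorem one_le_rank_of_ne_zero (A : Matrix m n K) {i : m} {j : n} (h : A i j ≠ 0) :
    1 ≤ A.rank :=
  A.card_le_rank_of_isUnit_submatrix (fun _ : Fin 1 => i) (fun _ => j) <| by
    rwa [isUnit_iff_isUnit_det, det_fin_one, isUnit_iff_ne_zero]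

theorem two_le_rank_of_ne_zero_of_eq_zero (A : Matrix m n K) {i₁ i₂ : m} {j₁ j₂ : n}
    (h₁₁ : A i₁ j₁ ≠ 0) (h₂₂ : A i₂ j₂ ≠ 0) (h₁₂ : A i₁ j₂ = 0) (h₂₁ : A i₂ j₁ = 0) :
    2 ≤ A.rank :=
  A.card_le_rank_of_isUnit_submatrix ![i₁, i₂] ![j₁, j₂] <| by
    rw [isUnit_iff_isUnit_det, det_fin_two, isUnit_iff_ne_zero]
    simpa [h₁₂, h₂₁] using mul_ne_zero h₁₁ h₂₂

theorem rank_of_ite_and (p : m → Prop) (q : n → Prop) [DecidablePred p] [DecidablePred q] :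
    (of fun i j => if p i ∧ q j then (1 : K) else 0).rank =
      if (∃ i, p i) ∧ (∃ j, q j) then 1 else 0 := by
  split_ifs with h
  · obtain ⟨⟨i, hi⟩, ⟨j, hj⟩⟩ := h
    refine le_antisymm ?_ (one_le_rank_of_ne_zero _ (i := i) (j := j) (by simp [hi, hj]))
    have hA : (of fun i j => if p i ∧ q j then (1 : K) else 0) =
        vecMulVec (fun i => if p i then 1 else 0) (fun j => if q j then 1 else 0) := by
      ext i j
      simp only [of_apply, vecMulVec_apply, ite_and, ite_mul, one_mul, zero_mul]
    exact hA ▸ rank_vecMulVec_le _ _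
  · convert rank_zero (m := m) (n := n) (R := K) using 2
    ext i j
    simp only [of_apply, zero_apply, ite_eq_right_iff, one_ne_zero]
    exact fun hij => h ⟨⟨i, hij.1⟩, ⟨j, hij.2⟩⟩

end Matrix

namespace AvgCutRank

open Finset Sum

section Counting

theorem sum_sum_ite_and {ι κ : Type*} [Fintype ι] [Fintype κ] (p : ι → Prop) (q : κ → Prop)
    [DecidablePred p] [DecidablePred q] :
    ∑ i, ∑ j, (if p i ∧ q j then (1 : ℝ) else 0) =
      (∑ i, if p i then 1 else 0) * ∑ j, if q j then 1 else 0 := by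
  simp only [sum_mul_sum, ite_zero_mul_ite_zero, mul_one]

theorem sum_toLeft_toRight {α β M : Type*} [Fintype α] [Fintype β] [AddCommMonoid M]
    (f : Finset α → Finset β → M) :
    ∑ X : Finset (α ⊕ β), f X.toLeft X.toRight = ∑ s, ∑ t, f s t := by
  rw [← Fintype.sum_prod_type']
  exact Fintype.sum_equiv sumEquiv.toEquiv _ _ fun _ => rfl

variable {ι : Type*} [Fintype ι] [DecidableEq ι]

theorem sum_ite_ne (c : ι) :
    ∑ x : ι, (if x ≠ c then (1 : ℝ) else 0) = Fintype.card ι - 1 := by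
  rw [sum_boole, filter_ne', card_erase_of_mem (mem_univ _), card_univ,
    Nat.cast_sub (Fintype.card_pos_iff.2 ⟨c⟩), Nat.cast_one]

theorem sum_ite_ne_univ :
    ∑ s : Finset ι, (if s ≠ univ then (1 : ℝ) else 0) = 2 ^ Fintype.card ι - 1 := by
  rw [sum_ite_ne, Fintype.card_finset, Nat.cast_pow, Nat.cast_ofNat]

theorem sum_ite_nonempty :
    ∑ s : Finset ι, (if s.Nonempty then (1 : ℝ) else 0) = 2 ^ Fintype.card ι - 1 := by
  simp_rw [nonempty_iff_ne_empty]
  rw [sum_ite_ne, Fintype.card_finset, Nat.cast_pow, Nat.cast_ofNat]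

theorem sum_ite_nonempty_and_ne_univ [Nonempty ι] :
    ∑ s : Finset ι, (if s.Nonempty ∧ s ≠ univ then (1 : ℝ) else 0) = 2 ^ Fintype.card ι - 2 := by
  simp_rw [nonempty_iff_ne_empty]
  rw [sum_boole, ← filter_filter, filter_ne', filter_ne',
    card_erase_of_mem (mem_erase.2 ⟨univ_nonempty.ne_empty, mem_univ _⟩),
    card_erase_of_mem (mem_univ _), card_univ, Fintype.card_finset, Nat.sub_sub,
    Nat.cast_sub (Nat.le_self_pow Fintype.card_ne_zero 2)]
  norm_num

end Counting

section Complete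

variable {V : Type*} [Fintype V] [DecidableEq V]

theorem cutRank_top (X : Finset V) :
    cutRank (⊤ : SimpleGraph V) X = if X.Nonempty ∧ X ≠ univ then 1 else 0 := by
  rw [cutRank]
  convert Matrix.rank_of_ite_and (K := ZMod 2) (fun _ : X => True)
    (fun _ : (Xᶜ : Finset V) => True) using 2
  · ext i j
    have hij : i.1 ≠ j.1 := fun h => mem_compl.1 j.2 (h ▸ i.2)
    simp [hij]
  · simp [Finset.Nonempty, eq_univ_iff_forall]

theorem avgCutRank_top [Nonempty V] :
    avgCutRank (⊤ : SimpleGraph V) = 1 - 2 / 2 ^ Fintype.card V := by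
  simp only [avgCutRank, cutRank_top, Nat.cast_ite, Nat.cast_one, Nat.cast_zero,
    sum_ite_nonempty_and_ne_univ]
  field_simp

end Complete

section CompleteBipartite

variable {α β : Type*} [Fintype α] [Fintype β] [DecidableEq α] [DecidableEq β]

theorem cutRank_completeBipartiteGraph (X : Finset (α ⊕ β)) :
    cutRank (completeBipartiteGraph α β) X =
      (if X.toLeft.Nonempty ∧ X.toRight ≠ univ then 1 else 0) +
      (if X.toRight.Nonempty ∧ X.toLeft ≠ univ then 1 else 0) := by
  set A : Matrix X (Xᶜ : Finset (α ⊕ β)) (ZMod 2) := Matrix.of fun i j =>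
    if (completeBipartiteGraph α β).Adj i.1 j.1 then 1 else 0 with hA
  have hsplit : A = Matrix.of (fun i j => if i.1.isLeft ∧ j.1.isRight then 1 else 0) +
      Matrix.of (fun i j => if i.1.isRight ∧ j.1.isLeft then 1 else 0) := by
    ext ⟨a | b, hi⟩ ⟨a' | b', hj⟩ <;> simp [hA]
  have hLR : X.toLeft.Nonempty ∧ X.toRight ≠ univ ↔ ∃ a b, inl a ∈ X ∧ inr b ∉ X := by
    simp [Finset.Nonempty, eq_univ_iff_forall]
  have hRL : X.toRight.Nonempty ∧ X.toLeft ≠ univ ↔ ∃ b a, inr b ∈ X ∧ inl a ∉ X := by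
    simp [Finset.Nonempty, eq_univ_iff_forall]
  rw [show cutRank (completeBipartiteGraph α β) X = A.rank by rw [cutRank]]
  refine le_antisymm ?_ ?_
  · calc A.rank ≤ _ := hsplit ▸ Matrix.rank_add_le _ _
      _ = _ := by
        rw [Matrix.rank_of_ite_and, Matrix.rank_of_ite_and]
        simp [Finset.Nonempty, eq_univ_iff_forall]
  · simp only [hLR, hRL]
    split_ifs with hl hr hr
    · obtain ⟨a, b, ha, hb⟩ := hl
      obtain ⟨b', a', hb', ha'⟩ := hr
      exact A.two_le_rank_of_ne_zero_of_eq_zero (i₁ := ⟨inl a, ha⟩) (i₂ := ⟨inr b', hb'⟩)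
        (j₁ := ⟨inr b, mem_compl.2 hb⟩) (j₂ := ⟨inl a', mem_compl.2 ha'⟩)
        (by simp [hA]) (by simp [hA]) (by simp [hA]) (by simp [hA])
    · obtain ⟨a, b, ha, hb⟩ := hl
      exact A.one_le_rank_of_ne_zero (i := ⟨inl a, ha⟩) (j := ⟨inr b, mem_compl.2 hb⟩)
        (by simp [hA])
    · obtain ⟨b, a, hb, ha⟩ := hr
      exact A.one_le_rank_of_ne_zero (i := ⟨inr b, hb⟩) (j := ⟨inl a, mem_compl.2 ha⟩)
        (by simp [hA])
    · exact Nat.zero_le _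

theorem avgCutRank_completeBipartiteGraph :
    avgCutRank (completeBipartiteGraph α β) =
      2 * (2 ^ Fintype.card α - 1) * (2 ^ Fintype.card β - 1) /
        2 ^ (Fintype.card α + Fintype.card β) := by
  simp only [avgCutRank, cutRank_completeBipartiteGraph, Fintype.card_sum, Nat.cast_add,
    Nat.cast_ite, Nat.cast_one, Nat.cast_zero]
  rw [sum_toLeft_toRight (fun s t => (if s.Nonempty ∧ t ≠ univ then (1 : ℝ) else 0) +
    (if t.Nonempty ∧ s ≠ univ then 1 else 0))]
  simp only [sum_add_distrib]
  rw [sum_comm (f := fun (s : Finset α) (t : Finset β) =>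
      if t.Nonempty ∧ s ≠ univ then (1 : ℝ) else 0),
    sum_sum_ite_and, sum_sum_ite_and, sum_ite_nonempty, sum_ite_nonempty, sum_ite_ne_univ,
    sum_ite_ne_univ]
  ring

end CompleteBipartite

theorem stmt9_general (m k : ℕ) (hk : 1 ≤ k) :
    avgCutRank (⊤ : SimpleGraph (Fin k)) = 1 - (2 : ℝ) ^ (1 - (k : ℤ)) ∧
    avgCutRank (completeBipartiteGraph (Fin m) (Fin k)) =
      ((2 : ℝ) ^ m - 1) * ((2 : ℝ) ^ k - 1) / 2 ^ (m + k - 1) ∧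
    avgCutRank (completeBipartiteGraph (Fin 1) (Fin k)) = 1 - (2 : ℝ) ^ (-(k : ℤ)) ∧
    avgCutRank (⊤ : SimpleGraph (Fin (k + 1))) = 1 - (2 : ℝ) ^ (-(k : ℤ)) := by
  have htop (n : ℕ) (hn : 1 ≤ n) :
      avgCutRank (⊤ : SimpleGraph (Fin n)) = 1 - (2 : ℝ) ^ (1 - (n : ℤ)) := by
    have : Nonempty (Fin n) := ⟨⟨0, hn⟩⟩
    rw [avgCutRank_top, Fintype.card_fin, zpow_sub₀ two_ne_zero, zpow_one, zpow_natCast]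
  have hbip (n : ℕ) : avgCutRank (completeBipartiteGraph (Fin n) (Fin k)) =
      ((2 : ℝ) ^ n - 1) * ((2 : ℝ) ^ k - 1) / 2 ^ (n + k - 1) := by
    obtain ⟨j, hj⟩ : ∃ j, n + k = j + 1 := ⟨n + k - 1, by omega⟩
    rw [avgCutRank_completeBipartiteGraph, Fintype.card_fin, Fintype.card_fin, hj,
      Nat.add_sub_cancel, pow_succ]
    field_simp
  refine ⟨htop k hk, hbip m, ?_, ?_⟩
  · rw [hbip 1, Nat.add_sub_cancel_left, zpow_neg, zpow_natCast]
    field_simp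
    ring
  · rw [htop (k + 1) (by omega)]
    push_cast
    ring_nf

/-- `Eρ(K_k) = 1 − 2^(1−k)`,
`Eρ(K_{m,k}) = (2^m − 1)(2^k − 1)/2^(m+k−1)`, and in particular
`Eρ(K_{1,k}) = 1 − 2^(−k) = Eρ(K_{k+1})`. -/
theorem stmt9 (m k : ℕ) (hm : 1 ≤ m) (hk : 1 ≤ k) :
    avgCutRank (⊤ : SimpleGraph (Fin k)) = 1 - (2 : ℝ) ^ (1 - (k : ℤ)) ∧
    avgCutRank (completeBipartiteGraph (Fin m) (Fin k)) =
      ((2 : ℝ) ^ m - 1) * ((2 : ℝ) ^ k - 1) / 2 ^ (m + k - 1) ∧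
    avgCutRank (completeBipartiteGraph (Fin 1) (Fin k)) = 1 - (2 : ℝ) ^ (-(k : ℤ)) ∧
    avgCutRank (⊤ : SimpleGraph (Fin (k + 1))) = 1 - (2 : ℝ) ^ (-(k : ℤ)) :=
  stmt9_general m k hk

end AvgCutRank
end

section
/- Let G be a finite simple graph in which u₁, …, u_k (k ≥ 1) are pairwise false twins, and let d = deg_G(u₁). Then Eρ(G − u₁) ≥ Eρ(G) − (2^d − 1)/2^{k+d−1}. In particular, if deg_G(u₁) = 1 then Eρ(G − u₁) ≥ Eρ(G) − 2^{−k}. -/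
open scoped Classical

namespace Submodule

variable {K M : Type*} [DivisionRing K] [AddCommGroup M] [Module K M] [FiniteDimensional K M]

theorem finrank_span_insert_le (c : M) (t : Set M) :
    Module.finrank K (span K (insert c t)) ≤ Module.finrank K (span K t) + 1 := by
  rw [span_insert, add_comm]
  refine (finrank_add_le_finrank_add_finrank _ _).trans (add_le_add_left ?_ _)
  simpa using finrank_span_le_card (R := K) ({c} : Set M)

end Submodule

namespace Finset

theorem card_filter_subset_not_disjoint_add {α : Type*} [Fintype α] [DecidableEq α]
    {T N : Finset α} (h : Disjoint T N) :
    #{Y | T ⊆ Y ∧ ¬Disjoint N Y} + 2 ^ (Fintype.card α - #T - #N) =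
      2 ^ (Fintype.card α - #T) := by
  have hsup : #{Y | T ⊆ Y} = 2 ^ (Fintype.card α - #T) := by
    rw [← card_univ, ← card_Icc_finset (subset_univ T)]
    congr 1
    ext Y
    simp
  have hdisj : #{Y | T ⊆ Y ∧ Disjoint N Y} = 2 ^ (Fintype.card α - #T - #N) := by
    rw [show Fintype.card α - #T - #N = #Nᶜ - #T by rw [card_compl]; omega,
      ← card_Icc_finset (subset_compl_iff_disjoint_right.2 h)]
    congr 1
    ext Y
    simp [subset_compl_iff_disjoint_right, disjoint_comm]
  rw [← hsup, ← hdisj,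
    ← card_filter_add_card_filter_not (s := {Y | T ⊆ Y}) (fun Y => ¬Disjoint N Y)]
  simp [filter_filter]

end Finset

namespace AvgCutRank

open Finset Module Submodule

section DeleteVert

variable [Fintype V] [DecidableEq V] (G : SimpleGraph V)

theorem cutRank_eq_rank_submatrix (X : Finset V) :
    cutRank G X =
      ((G.adjMatrix (ZMod 2)).submatrix ((↑) : X → V) ((↑) : (Xᶜ : Finset V) → V)).rank :=
  rfl

theorem cutRank_compl (X : Finset V) : cutRank G Xᶜ = cutRank G X := by
  rw [cutRank_eq_rank_submatrix, cutRank_eq_rank_submatrix, ← Matrix.rank_transpose,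
    Matrix.transpose_submatrix, G.transpose_adjMatrix, ← Matrix.rank_submatrix _
      (Equiv.subtypeEquivRight (by simp) : (Xᶜᶜ : Finset V) ≃ X) (Equiv.refl _)]
  rfl

noncomputable def adjCol (X : Finset V) (w : V) : X → ZMod 2 := fun i => G.adjMatrix (ZMod 2) i w

theorem cutRank_eq_finrank_span (X : Finset V) :
    cutRank G X =
      finrank (ZMod 2) (span (ZMod 2) (Set.range fun j : (Xᶜ : Finset V) => adjCol G X j)) := by
  rw [cutRank_eq_rank_submatrix, Matrix.rank_eq_finrank_span_cols]
  rfl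

variable (v : V)

theorem cutRank_deleteVert_eq_finrank_span (Y : Finset {w // w ≠ v}) :
    cutRank (deleteVert G v) Y = finrank (ZMod 2) (span (ZMod 2)
      (Set.range fun j : (Yᶜ : Finset _) => adjCol G (Y.map (.subtype _)) j.1.1)) := by
  have : cutRank (deleteVert G v) Y = (((G.adjMatrix (ZMod 2)).submatrix
      ((↑) : Y.map (.subtype _) → V) fun j : (Yᶜ : Finset _) => j.1.1).submatrix
        (equivMap (.subtype _) Y) (Equiv.refl _)).rank := rfl
  rw [this, Matrix.rank_submatrix, Matrix.rank_eq_finrank_span_cols]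
  rfl

theorem range_adjCol_subset_insert (Y : Finset {w // w ≠ v}) :
    (Set.range fun j : ((Y.map (.subtype _))ᶜ : Finset V) => adjCol G (Y.map (.subtype _)) j) ⊆
      insert (adjCol G (Y.map (.subtype _)) v)
        (Set.range fun j : (Yᶜ : Finset _) => adjCol G (Y.map (.subtype _)) j.1.1) := by
  rintro _ ⟨j, rfl⟩
  by_cases hj : j.1 = v
  · exact Or.inl (by simp only [hj])
  · refine Or.inr ⟨⟨⟨j, hj⟩, ?_⟩, rfl⟩
    exact mem_compl.2 fun hY => mem_compl.1 j.2 (mem_map.2 ⟨⟨j, hj⟩, hY, rfl⟩)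

theorem cutRank_map_le_add_one (Y : Finset {w // w ≠ v}) :
    cutRank G (Y.map (.subtype _)) ≤ cutRank (deleteVert G v) Y + 1 := by
  rw [cutRank_eq_finrank_span, cutRank_deleteVert_eq_finrank_span]
  exact (finrank_mono (span_mono (range_adjCol_subset_insert G v Y))).trans
    (finrank_span_insert_le _ _)

theorem cutRank_map_le_of_adjCol_mem_span (Y : Finset {w // w ≠ v})
    (h : adjCol G (Y.map (.subtype _)) v ∈ span (ZMod 2)
      (Set.range fun j : (Yᶜ : Finset _) => adjCol G (Y.map (.subtype _)) j.1.1)) :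
    cutRank G (Y.map (.subtype _)) ≤ cutRank (deleteVert G v) Y := by
  rw [cutRank_eq_finrank_span, cutRank_deleteVert_eq_finrank_span]
  exact finrank_mono ((span_mono (range_adjCol_subset_insert G v Y)).trans_eq
    (span_insert_eq_span h))

theorem cutRank_map_le_of_forall_not_adj (Y : Finset {w // w ≠ v})
    (h : ∀ w ∈ Y, ¬G.Adj v w) :
    cutRank G (Y.map (.subtype _)) ≤ cutRank (deleteVert G v) Y := by
  refine cutRank_map_le_of_adjCol_mem_span G v Y ?_
  have hzero : adjCol G (Y.map (.subtype _)) v = 0 := by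
    funext i
    obtain ⟨w, hw, hwi⟩ := mem_map.1 i.2
    simp [adjCol, ← hwi, G.adj_comm, h w hw]
  exact hzero ▸ zero_mem _

theorem cutRank_map_le_of_twin (Y : Finset {w // w ≠ v}) (w : {w // w ≠ v}) (hw : w ∉ Y)
    (htwin : G.neighborSet w = G.neighborSet v) :
    cutRank G (Y.map (.subtype _)) ≤ cutRank (deleteVert G v) Y := by
  refine cutRank_map_le_of_adjCol_mem_span G v Y (subset_span ⟨⟨w, mem_compl.2 hw⟩, ?_⟩)
  have hadj (x : V) : G.Adj x w ↔ G.Adj x v := by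
    rw [G.adj_comm, ← G.mem_neighborSet, htwin, G.mem_neighborSet, G.adj_comm]
  funext i
  simp [adjCol, hadj]

theorem sum_finset_eq_sum_map_add_insert {M : Type*} [AddCommMonoid M] (f : Finset V → M) :
    ∑ X, f X = ∑ Y : Finset {w // w ≠ v},
      (f (Y.map (.subtype _)) + f (insert v (Y.map (.subtype _)))) := by
  have hpowerset : (univ.erase v).powerset =
      univ.map (mapEmbedding (.subtype (· ≠ v))).toEmbedding := by
    ext t
    rw [mem_powerset, ← filter_ne', ← univ_map_subtype,
      subset_map_iff]
    simp [eq_comm]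
  rw [← powerset_univ, ← insert_erase (mem_univ v),
    sum_powerset_insert (notMem_erase v _), ← sum_add_distrib,
    hpowerset, sum_map]
  rfl

theorem cutRank_map_le_add_ite {T : Finset V}
    (hT : ∀ w ∈ T, G.neighborSet w = G.neighborSet v) (Y : Finset {w // w ≠ v}) :
    cutRank G (Y.map (.subtype _)) ≤ cutRank (deleteVert G v) Y +
      if T.subtype (· ≠ v) ⊆ Y ∧
        ¬Disjoint ((G.neighborFinset v).subtype (· ≠ v)) Y then 1 else 0 := by
  split_ifs with hbad
  · exact cutRank_map_le_add_one G v Y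
  · rw [add_zero]
    rcases not_and_or.1 hbad with hTY | hNY
    · obtain ⟨w, hwT, hwY⟩ := not_subset.1 hTY
      exact cutRank_map_le_of_twin G v Y w hwY (hT w (mem_subtype.1 hwT))
    · refine cutRank_map_le_of_forall_not_adj G v Y fun w hwY hvw => hNY ?_
      exact not_disjoint_iff.2 ⟨w, by simpa using hvw, hwY⟩

theorem sum_cutRank_le {T : Finset V}
    (hT : ∀ w ∈ T, G.neighborSet w = G.neighborSet v) :
    ∑ X, cutRank G X ≤ 2 * ∑ Y, cutRank (deleteVert G v) Y +
      2 * #{Y | T.subtype (· ≠ v) ⊆ Y ∧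
        ¬Disjoint ((G.neighborFinset v).subtype (· ≠ v)) Y} := by
  set bad : Finset {w // w ≠ v} → ℕ :=
    fun Y => if T.subtype (· ≠ v) ⊆ Y ∧
        ¬Disjoint ((G.neighborFinset v).subtype (· ≠ v)) Y then 1 else 0
  have hinsert (Y : Finset {w // w ≠ v}) :
      cutRank G (insert v (Y.map (.subtype _))) ≤ cutRank (deleteVert G v) Y + bad Yᶜ := by
    have hcompl : insert v (Y.map (.subtype _)) = (Yᶜ.map (.subtype _))ᶜ := by
      ext x
      by_cases hx : x = v <;> simp [hx]
    rw [hcompl, cutRank_compl, ← cutRank_compl (deleteVert G v) Y]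
    exact cutRank_map_le_add_ite G v hT Yᶜ
  have hbad_compl : ∑ Y, bad Yᶜ = ∑ Y, bad Y := Equiv.sum_comp (compl_involutive.toPerm _) bad
  rw [sum_finset_eq_sum_map_add_insert v]
  calc ∑ Y, (cutRank G (Y.map (.subtype _)) + cutRank G (insert v (Y.map (.subtype _))))
      ≤ ∑ Y, ((cutRank (deleteVert G v) Y + bad Y) + (cutRank (deleteVert G v) Y + bad Yᶜ)) :=
        sum_le_sum fun Y _ => add_le_add (cutRank_map_le_add_ite G v hT Y) (hinsert Y)
    _ = 2 * ∑ Y, cutRank (deleteVert G v) Y + 2 * ∑ Y, bad Y := by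
        simp only [sum_add_distrib, hbad_compl]
        ring
    _ = _ := by rw [sum_boole]; rfl

theorem avgCutRank_le_avgCutRank_deleteVert_add {T : Finset V} (hvT : v ∉ T)
    (hT : ∀ w ∈ T, G.neighborSet w = G.neighborSet v) :
    avgCutRank G ≤
      avgCutRank (deleteVert G v) + (2 ^ G.degree v - 1) / 2 ^ (#T + G.degree v) := by
  set T' := T.subtype (· ≠ v)
  set N' := (G.neighborFinset v).subtype (· ≠ v)
  have hT' : #T' = #T := by
    rw [card_subtype, filter_true_of_mem fun w hw => ne_of_mem_of_not_mem hw hvT]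
  have hN' : #N' = G.degree v := by
    rw [card_subtype, filter_true_of_mem fun w hw => ne_of_mem_of_not_mem hw (by simp),
      G.card_neighborFinset_eq_degree]
  have hdisj : Disjoint T' N' := by
    refine disjoint_left.2 fun w hwT hwN => G.irrefl (v := w.1) ?_
    rw [← G.mem_neighborSet, hT w (mem_subtype.1 hwT)]
    exact (G.mem_neighborFinset _ _).1 (mem_subtype.1 hwN)
  have hcard : Fintype.card V = Fintype.card {w // w ≠ v} + 1 := by
    have := Fintype.card_pos_iff.2 ⟨v⟩
    simp only [Fintype.card_subtype_compl, Fintype.card_unique]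
    omega
  obtain ⟨e, he⟩ : ∃ e, Fintype.card {w // w ≠ v} = #T' + #N' + e :=
    Nat.exists_eq_add_of_le ((card_union_of_disjoint hdisj).symm.trans_le (card_le_univ _))
  have hcount := card_filter_subset_not_disjoint_add hdisj
  rw [show Fintype.card {w // w ≠ v} - #T' - #N' = e by omega,
    show Fintype.card {w // w ≠ v} - #T' = #N' + e by omega] at hcount
  have hbad : (#{Y | T' ⊆ Y ∧ ¬Disjoint N' Y} : ℝ) = 2 ^ e * (2 ^ #N' - 1) := by
    rw [mul_sub, ← pow_add, mul_one, add_comm e, eq_sub_iff_add_eq]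
    exact_mod_cast hcount
  have hsum : ∑ X, (cutRank G X : ℝ) ≤ 2 * ∑ Y, (cutRank (deleteVert G v) Y : ℝ) +
      2 * #{Y | T' ⊆ Y ∧ ¬Disjoint N' Y} := by
    exact_mod_cast sum_cutRank_le G v hT
  rw [avgCutRank, avgCutRank, hcard, ← hT', ← hN']
  refine (div_le_div_of_nonneg_right hsum (by positivity)).trans_eq ?_
  rw [hbad, he]
  field_simp
  ring

end DeleteVert

/-- If `u 0, …, u (k−1)` (`k ≥ 1`) are pairwise false twins in `G`
and `d` is the degree of `u 0`, then `Eρ(G − u 0) ≥ Eρ(G) − (2^d − 1)/2^(k+d−1)`;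
in particular if `d = 1` then `Eρ(G − u 0) ≥ Eρ(G) − 2^(−k)`. -/
theorem stmt12 {V : Type} [Fintype V] [DecidableEq V] (G : SimpleGraph V)
    (k : ℕ) (hk : 1 ≤ k) (u : Fin k → V) (hinj : Function.Injective u)
    (htwins : ∀ i j : Fin k, i ≠ j →
      ¬G.Adj (u i) (u j) ∧ G.neighborSet (u i) = G.neighborSet (u j)) :
    avgCutRank G - ((2 : ℝ) ^ (G.neighborSet (u ⟨0, hk⟩)).ncard - 1) /
        2 ^ (k + (G.neighborSet (u ⟨0, hk⟩)).ncard - 1) ≤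
      avgCutRank (deleteVert G (u ⟨0, hk⟩)) ∧
    ((G.neighborSet (u ⟨0, hk⟩)).ncard = 1 →
      avgCutRank G - ((2 : ℝ) ^ k)⁻¹ ≤ avgCutRank (deleteVert G (u ⟨0, hk⟩))) := by
  set v := u ⟨0, hk⟩
  have hdeg : (G.neighborSet v).ncard = G.degree v := by
    rw [Set.ncard_eq_toFinset_card', ← G.neighborFinset_def, G.card_neighborFinset_eq_degree]
  have hT (w : V) (hw : w ∈ (univ.image u).erase v) :
      G.neighborSet w = G.neighborSet v := by
    obtain ⟨hwv, hw⟩ := mem_erase.1 hw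
    obtain ⟨i, -, rfl⟩ := mem_image.1 hw
    exact (htwins i ⟨0, hk⟩ fun h => hwv (h ▸ rfl)).2
  have hTcard : ((univ.image u).erase v).card = k - 1 := by
    rw [card_erase_of_mem (mem_image_of_mem _ (mem_univ _)),
      card_image_of_injective _ hinj, card_univ, Fintype.card_fin]
  have hbound := avgCutRank_le_avgCutRank_deleteVert_add G v (notMem_erase v _) hT
  rw [hTcard, ← hdeg, show k - 1 + (G.neighborSet v).ncard = k + (G.neighborSet v).ncard - 1 by
    omega] at hbound
  refine ⟨by linarith, fun hd => ?_⟩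
  rw [hd, show k + 1 - 1 = k by omega] at hbound
  norm_num at hbound
  linarith

end AvgCutRank
end

section
/- For every finite simple graph G, the maximum cut-rank satisfies maxρ(G) ≤ 4·Eρ(G). -/
/-!
Fix `X` and split `X = (X \ S) ∪ (X ∩ S)` and `Xᶜ = (Xᶜ \ S) ∪ (Xᶜ ∩ S)` along an arbitrary
`S`. Rank is subadditive over such splittings, and each of the four resulting blocks of the
`X × Xᶜ` adjacency matrix is a submatrix of the cut matrix of `S` or of `S ∆ X` (up to
transposition, the adjacency matrix being symmetric). Hence `ρ(X) ≤ 2ρ(S) + 2ρ(S ∆ X)` for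
every `S`; averaging over `S`, and using that `S ↦ S ∆ X` is a bijection, gives
`ρ(X) ≤ 4 Eρ(G)`.
-/

open scoped Classical

namespace Matrix

variable {F : Type*} [Field F] {m n m₁ m₂ n₁ n₂ : Type*} [Fintype m] [Fintype n]
  [Fintype m₁] [Fintype m₂] [Fintype n₁] [Fintype n₂]

theorem rank_le_rank_add_rank_of_cols (A : Matrix m n F) (c₁ : n₁ → n) (c₂ : n₂ → n)
    (h : Set.range c₁ ∪ Set.range c₂ = Set.univ) :
    A.rank ≤ (A.submatrix id c₁).rank + (A.submatrix id c₂).rank := by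
  simp only [rank_eq_finrank_span_cols]
  refine (Submodule.finrank_mono ?_).trans (Submodule.finrank_add_le_finrank_add_finrank _ _)
  rw [← Submodule.span_union]
  refine Submodule.span_mono ?_
  rintro _ ⟨j, rfl⟩
  obtain ⟨k, rfl⟩ | ⟨k, rfl⟩ := h.symm ▸ Set.mem_univ j
  · exact Or.inl ⟨k, rfl⟩
  · exact Or.inr ⟨k, rfl⟩

theorem rank_le_rank_add_rank_of_rows (A : Matrix m n F) (r₁ : m₁ → m) (r₂ : m₂ → m)
    (h : Set.range r₁ ∪ Set.range r₂ = Set.univ) :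
    A.rank ≤ (A.submatrix r₁ id).rank + (A.submatrix r₂ id).rank := by
  simpa only [← rank_transpose A, ← rank_transpose (A.submatrix _ _), transpose_submatrix]
    using Aᵀ.rank_le_rank_add_rank_of_cols r₁ r₂ h

end Matrix

namespace AvgCutRank

open Finset Matrix
open scoped symmDiff

section BlockRank

variable {F V : Type*} [Field F]

noncomputable def blockRank (A : Matrix V V F) (R C : Finset V) : ℕ :=
  (A.submatrix ((↑) : R → V) ((↑) : C → V)).rank

theorem blockRank_comm {A : Matrix V V F} (hA : A.IsSymm) (R C : Finset V) :
    blockRank A R C = blockRank A C R := by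
  rw [blockRank, ← rank_transpose, transpose_submatrix, hA.eq, blockRank]

variable (A : Matrix V V F)

theorem blockRank_mono {R R' C C' : Finset V} (hR : R ⊆ R') (hC : C ⊆ C') :
    blockRank A R C ≤ blockRank A R' C' :=
  rank_submatrix_le (A.submatrix ((↑) : R' → V) ((↑) : C' → V))
    (fun x : R => (⟨x, hR x.2⟩ : R')) (fun x : C => (⟨x, hC x.2⟩ : C'))

theorem blockRank_union_left_le [DecidableEq V] (R₁ R₂ C : Finset V) :
    blockRank A (R₁ ∪ R₂) C ≤ blockRank A R₁ C + blockRank A R₂ C :=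
  rank_le_rank_add_rank_of_rows _
    (fun x : R₁ => (⟨x, subset_union_left x.2⟩ : ↥(R₁ ∪ R₂)))
    (fun x : R₂ => (⟨x, subset_union_right x.2⟩ : ↥(R₁ ∪ R₂)))
    (Set.eq_univ_of_forall fun x =>
      (mem_union.1 x.2).imp (fun hx => ⟨⟨x, hx⟩, rfl⟩) (fun hx => ⟨⟨x, hx⟩, rfl⟩))

theorem blockRank_union_right_le [DecidableEq V] (R C₁ C₂ : Finset V) :
    blockRank A R (C₁ ∪ C₂) ≤ blockRank A R C₁ + blockRank A R C₂ :=
  rank_le_rank_add_rank_of_cols _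
    (fun x : C₁ => (⟨x, subset_union_left x.2⟩ : ↥(C₁ ∪ C₂)))
    (fun x : C₂ => (⟨x, subset_union_right x.2⟩ : ↥(C₁ ∪ C₂)))
    (Set.eq_univ_of_forall fun x =>
      (mem_union.1 x.2).imp (fun hx => ⟨⟨x, hx⟩, rfl⟩) (fun hx => ⟨⟨x, hx⟩, rfl⟩))

end BlockRank

theorem blockRank_compl_le_two_mul_add {F V : Type*} [Field F] [Fintype V] [DecidableEq V]
    {A : Matrix V V F} (hA : A.IsSymm) (X S : Finset V) :
    blockRank A X Xᶜ ≤ 2 * (blockRank A S Sᶜ + blockRank A (S ∆ X) (S ∆ X)ᶜ) := by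
  have h₁ : blockRank A (X \ S) (Xᶜ \ S) ≤ blockRank A (S ∆ X) (S ∆ X)ᶜ :=
    blockRank_mono A (by intro x; simp only [mem_sdiff, mem_symmDiff]; tauto)
      (by intro x; simp only [mem_sdiff, mem_compl, mem_symmDiff]; tauto)
  have h₂ : blockRank A (X \ S) (Xᶜ ∩ S) ≤ blockRank A S Sᶜ := by
    rw [blockRank_comm hA]
    exact blockRank_mono A inter_subset_right
      (by intro x; simp only [mem_sdiff, mem_compl]; tauto)
  have h₃ : blockRank A (X ∩ S) (Xᶜ \ S) ≤ blockRank A S Sᶜ :=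
    blockRank_mono A inter_subset_right (by intro x; simp only [mem_sdiff, mem_compl]; tauto)
  have h₄ : blockRank A (X ∩ S) (Xᶜ ∩ S) ≤ blockRank A (S ∆ X) (S ∆ X)ᶜ := by
    rw [blockRank_comm hA]
    exact blockRank_mono A (by intro x; simp only [mem_inter, mem_compl, mem_symmDiff]; tauto)
      (by intro x; simp only [mem_inter, mem_compl, mem_symmDiff]; tauto)
  calc blockRank A X Xᶜ = blockRank A (X \ S ∪ X ∩ S) (Xᶜ \ S ∪ Xᶜ ∩ S) := by
        rw [sdiff_union_inter, sdiff_union_inter]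
    _ ≤ blockRank A (X \ S) (Xᶜ \ S ∪ Xᶜ ∩ S) +
          blockRank A (X ∩ S) (Xᶜ \ S ∪ Xᶜ ∩ S) :=
        blockRank_union_left_le _ _ _ _
    _ ≤ (blockRank A (X \ S) (Xᶜ \ S) + blockRank A (X \ S) (Xᶜ ∩ S)) +
          (blockRank A (X ∩ S) (Xᶜ \ S) + blockRank A (X ∩ S) (Xᶜ ∩ S)) :=
        add_le_add (blockRank_union_right_le _ _ _ _) (blockRank_union_right_le _ _ _ _)
    _ ≤ 2 * (blockRank A S Sᶜ + blockRank A (S ∆ X) (S ∆ X)ᶜ) := by omega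

section CutRank

variable {V : Type*} [Fintype V] [DecidableEq V] (G : SimpleGraph V)

theorem cutRank_le_two_mul_add (X S : Finset V) :
    cutRank G X ≤ 2 * (cutRank G S + cutRank G (S ∆ X)) :=
  -- `cutRank G X` unfolds to `blockRank (G.adjMatrix (ZMod 2)) X Xᶜ`
  blockRank_compl_le_two_mul_add G.isSymm_adjMatrix X S

theorem two_pow_card_mul_cutRank_le (X : Finset V) :
    2 ^ Fintype.card V * cutRank G X ≤ 4 * ∑ S : Finset V, cutRank G S := by
  have hshift : ∑ S : Finset V, cutRank G (S ∆ X) = ∑ S : Finset V, cutRank G S :=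
    Fintype.sum_bijective (· ∆ X) (symmDiff_left_involutive X).bijective _ _ fun _ => rfl
  calc 2 ^ Fintype.card V * cutRank G X = ∑ _S : Finset V, cutRank G X := by
        simp [Fintype.card_finset]
    _ ≤ ∑ S : Finset V, 2 * (cutRank G S + cutRank G (S ∆ X)) :=
        sum_le_sum fun S _ => cutRank_le_two_mul_add G X S
    _ = 4 * ∑ S : Finset V, cutRank G S := by
        rw [← mul_sum, sum_add_distrib, hshift]; ring

theorem cutRank_le_four_mul_avgCutRank (X : Finset V) :
    (cutRank G X : ℝ) ≤ 4 * avgCutRank G := by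
  rw [avgCutRank, mul_div_assoc', le_div_iff₀ (by positivity), mul_comm]
  exact_mod_cast two_pow_card_mul_cutRank_le G X

end CutRank

/-- For every graph, `maxρ(G) ≤ 4·Eρ(G)`. -/
theorem stmt14 {V : Type} [Fintype V] [DecidableEq V] (G : SimpleGraph V) :
    (maxCutRank G : ℝ) ≤ 4 * avgCutRank G := by
  obtain ⟨X, -, hX⟩ := exists_mem_eq_sup univ univ_nonempty (cutRank G)
  rw [maxCutRank, hX]
  exact cutRank_le_four_mul_avgCutRank G X

end AvgCutRank
end

section
/- For every finite simple graph G, the neighborhood diversity satisfies nd(G) < 2^{2·maxρ(G) + 2}. -/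
open scoped Classical

namespace AvgCutRank

variable {V : Type*} {W : Type*}

/-! Choose one vertex from each twin class: this gives a set `R` of `nd G` pairwise non-twin
vertices. While `|R| ≥ 2`, two members of `R` are distinguished by a vertex `w`. Keep the larger
side of `R` with respect to adjacency to `w`, pick a vertex `b ∈ R` from the other side, and keep
the larger side with respect to adjacency to `b`. This shrinks `R` by a factor of at most `4` and
records a pair `(x, z) = (b, w)`. For every surviving `r`, the GF(2) rows `x_i - r` of the adjacency
matrix restricted to the columns `z_j` form a unit upper triangular matrix, so the cut-rank of
`{x_1, …, x_t, r}` is at least `t`. Hence at most `maxρ(G)` steps are possible, and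
`nd G = |R| < 4 ^ (maxρ(G) + 1)`. -/

theorem le_rank_of_sub_row_isUpperTriangular {m n K : Type*} [Fintype m] [Fintype n]
    [DecidableEq m] [Field K] (M : Matrix m n K) {t : ℕ} (x : Fin t → m) (r : m)
    (z : Fin t → n) (hlt : ∀ i j, j < i → M (x i) (z j) = M r (z j))
    (hdiag : ∀ i, M (x i) (z i) ≠ M r (z i)) : t ≤ M.rank := by
  set N : Matrix (Fin t) m K := Matrix.of fun i => Pi.single (x i) 1 - Pi.single r 1
  set T := (N * M).submatrix id z
  have hT : ∀ i j, T i j = M (x i) (z j) - M r (z j) := by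
    intro i j
    simp [T, N, Matrix.mul_apply, sub_mul, Finset.sum_sub_distrib, Pi.single_apply]
  have hupper : T.IsUpperTriangular := fun i j hji => by
    rw [hT, hlt i j hji, sub_self]
  have hrank : T.rank = t := by
    have := Matrix.rank_mul_eq_right_of_isUpperTriangular T (1 : Matrix (Fin t) (Fin t) K) hupper
      (fun i => by rw [Matrix.diag_apply, hT, sub_ne_zero]; exact hdiag i)
    rwa [Matrix.mul_one, Matrix.rank_one, Fintype.card_fin] at this
  calc t = T.rank := hrank.symm
    _ ≤ (N * M).rank := Matrix.rank_submatrix_le _ _ _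
    _ ≤ M.rank := Matrix.rank_mul_le_right _ _

theorem exists_large_subset_forall_iff {α : Type*} (s : Finset α) (p : α → Prop) :
    ∃ u ⊆ s, s.card ≤ 2 * u.card ∧ ∃ c : Prop, ∀ a ∈ u, p a ↔ c := by
  have hsplit := Finset.card_filter_add_card_filter_not (s := s) p
  rcases le_total (s.filter p).card (s.filter (¬ p ·)).card with h | h
  · exact ⟨s.filter (¬ p ·), Finset.filter_subset _ _, by omega, False,
      fun a ha => iff_false_intro (Finset.mem_filter.mp ha).2⟩
  · exact ⟨s.filter p, Finset.filter_subset _ _, by omega, True,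
      fun a ha => iff_true_intro (Finset.mem_filter.mp ha).2⟩

section Twins

variable {G : SimpleGraph V}

theorem twinEq_symm {x y : V} (h : TwinEq G x y) : TwinEq G y x := by
  rcases h with h | h
  · exact Or.inl h.symm
  · exact Or.inr fun z hzy hzx => (h z hzx hzy).symm

theorem twinEq_trans {x y w : V} (h₁ : TwinEq G x y) (h₂ : TwinEq G y w) : TwinEq G x w := by
  rcases h₁ with rfl | h₁
  · exact h₂
  rcases h₂ with rfl | h₂
  · exact Or.inr h₁
  by_cases hxw : x = w
  · exact Or.inl hxw
  by_cases hxy : x = y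
  · subst hxy; exact Or.inr h₂
  by_cases hyw : y = w
  · subst hyw; exact Or.inr h₁
  refine Or.inr fun u hux huw => ?_
  by_cases huy : u = y
  · subst huy
    rw [G.adj_comm, h₂ x hxy hxw, G.adj_comm, h₁ w (Ne.symm hxw) (Ne.symm hyw), G.adj_comm]
  · exact (h₁ u hux huy).trans (h₂ u huy huw)

variable [Fintype V] [DecidableEq V]

theorem exists_pairwise_not_twinEq_card_eq_nd (G : SimpleGraph V) :
    ∃ R : Finset V, R.card = nd G ∧ (R : Set V).Pairwise fun r s => ¬ TwinEq G r s := by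
  set f : V → Finset V := fun x => Finset.univ.filter fun y => TwinEq G x y
  have hf : ∀ {x y}, TwinEq G x y → f x = f y := fun h => by
    ext u
    simp only [f, Finset.mem_filter, Finset.mem_univ, true_and]
    exact ⟨twinEq_trans (twinEq_symm h), twinEq_trans h⟩
  obtain ⟨R, -, hinj, himg⟩ := Finset.exists_subset_injOn_image_eq_of_surjOn (f := f)
    Set.univ (Finset.univ.image f) fun C hC => by
      obtain ⟨x, -, rfl⟩ := Finset.mem_image.mp hC
      exact ⟨x, trivial, rfl⟩
  refine ⟨R, ?_, fun r hr s hs hrs htwin => hrs (hinj hr hs (hf htwin))⟩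
  rw [nd, ← himg, Finset.card_image_of_injOn hinj]

end Twins

theorem le_cutRank_of_triangular [Fintype V] [DecidableEq V] (G : SimpleGraph V) {S : Finset V}
    {t : ℕ} (x : Fin t → V) (r : V) (z : Fin t → V) (hx : ∀ i, x i ∈ S) (hr : r ∈ S)
    (hz : ∀ j, z j ∉ S) (hlt : ∀ i j, j < i → (G.Adj (x i) (z j) ↔ G.Adj r (z j)))
    (hdiag : ∀ i, ¬(G.Adj (x i) (z i) ↔ G.Adj r (z i))) : t ≤ cutRank G S :=
  le_rank_of_sub_row_isUpperTriangular _ (fun i => ⟨x i, hx i⟩) ⟨r, hr⟩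
    (fun j => ⟨z j, Finset.mem_compl.mpr (hz j)⟩)
    (fun i j hji => by simp only [Matrix.of_apply, hlt i j hji])
    (fun i => by
      have := hdiag i
      simp only [Matrix.of_apply]
      split_ifs <;> simp_all)

section Greedy

variable {G : SimpleGraph V}

def IsHomogeneous (G : SimpleGraph V) (R : Finset V) (v : V) : Prop :=
  ∀ r ∈ R, ∀ s ∈ R, G.Adj r v ↔ G.Adj s v

theorem IsHomogeneous.mono {R R' : Finset V} {v : V} (h : IsHomogeneous G R v) (hR : R' ⊆ R) :
    IsHomogeneous G R' v :=
  fun r hr s hs => h r (hR hr) s (hR hs)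

structure TwinWitness (G : SimpleGraph V) {t : ℕ} (x z : Fin t → V) (R : Finset V) : Prop where
  x_notMem : ∀ i, x i ∉ R
  z_notMem : ∀ j, z j ∉ R
  x_ne_z : ∀ i j, x i ≠ z j
  isHomogeneous_x : ∀ i, IsHomogeneous G R (x i)
  isHomogeneous_z : ∀ j, IsHomogeneous G R (z j)
  adj_iff_of_lt : ∀ i j, j < i → ∀ r ∈ R, (G.Adj (x i) (z j) ↔ G.Adj r (z j))
  not_adj_iff_diag : ∀ i, ∀ r ∈ R, ¬(G.Adj (x i) (z i) ↔ G.Adj r (z i))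
  pairwise_not_twinEq : (R : Set V).Pairwise fun r s => ¬ TwinEq G r s

namespace TwinWitness

variable {t : ℕ} {x z : Fin t → V} {R : Finset V}

theorem snoc (hW : TwinWitness G x z R) {R' : Finset V} {b w : V} (hR' : R' ⊆ R) (hb : b ∈ R)
    (hbR' : b ∉ R') (hwR' : w ∉ R') (hbw : b ≠ w) (hxw : ∀ i, x i ≠ w)
    (hb_hom : IsHomogeneous G R' b) (hw_hom : IsHomogeneous G R' w)
    (hdiag : ∀ r ∈ R', ¬(G.Adj b w ↔ G.Adj r w)) :
    TwinWitness G (Fin.snoc x b) (Fin.snoc z w) R' where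
  x_notMem := by
    simp only [Fin.forall_fin_succ', Fin.snoc_castSucc, Fin.snoc_last]
    exact ⟨fun i h => hW.x_notMem i (hR' h), hbR'⟩
  z_notMem := by
    simp only [Fin.forall_fin_succ', Fin.snoc_castSucc, Fin.snoc_last]
    exact ⟨fun j h => hW.z_notMem j (hR' h), hwR'⟩
  x_ne_z := by
    simp only [Fin.forall_fin_succ', Fin.snoc_castSucc, Fin.snoc_last]
    exact ⟨fun i => ⟨hW.x_ne_z i, hxw i⟩, fun j h => hW.z_notMem j (h ▸ hb), hbw⟩
  isHomogeneous_x := by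
    simp only [Fin.forall_fin_succ', Fin.snoc_castSucc, Fin.snoc_last]
    exact ⟨fun i => (hW.isHomogeneous_x i).mono hR', hb_hom⟩
  isHomogeneous_z := by
    simp only [Fin.forall_fin_succ', Fin.snoc_castSucc, Fin.snoc_last]
    exact ⟨fun j => (hW.isHomogeneous_z j).mono hR', hw_hom⟩
  adj_iff_of_lt := by
    simp only [Fin.forall_fin_succ', Fin.snoc_castSucc, Fin.snoc_last,
      Fin.castSucc_lt_castSucc_iff]
    exact ⟨fun i => ⟨fun j hji r hr => hW.adj_iff_of_lt i j hji r (hR' hr),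
        fun h => absurd h (Fin.castSucc_lt_last i).not_gt⟩,
      fun j _ r hr => hW.isHomogeneous_z j b hb r (hR' hr), fun h => absurd h (lt_irrefl _)⟩
  not_adj_iff_diag := by
    simp only [Fin.forall_fin_succ', Fin.snoc_castSucc, Fin.snoc_last]
    exact ⟨fun i r hr => hW.not_adj_iff_diag i r (hR' hr), hdiag⟩
  pairwise_not_twinEq := hW.pairwise_not_twinEq.mono (Finset.coe_subset.mpr hR')

variable [Fintype V] [DecidableEq V]

theorem le_maxCutRank (hW : TwinWitness G x z R) {r : V} (hr : r ∈ R) : t ≤ maxCutRank G := by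
  refine le_trans ?_ (Finset.le_sup (Finset.mem_univ (insert r (Finset.univ.image x))))
  refine le_cutRank_of_triangular G x r z (fun i => by simp) (by simp) (fun j => ?_)
    (fun i j hji => hW.adj_iff_of_lt i j hji r hr) (fun i => hW.not_adj_iff_diag i r hr)
  simp only [Finset.mem_insert, Finset.mem_image, Finset.mem_univ, true_and, not_or, not_exists]
  exact ⟨fun h => hW.z_notMem j (h ▸ hr), fun i => hW.x_ne_z i j⟩

theorem exists_snoc (hW : TwinWitness G x z R) (hR : 2 ≤ R.card) :
    ∃ (b w : V) (R' : Finset V), TwinWitness G (Fin.snoc x b) (Fin.snoc z w) R' ∧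
      R.card ≤ 4 * R'.card + 1 ∧ R'.card < R.card := by
  obtain ⟨a, ha, b, hb, hab⟩ := Finset.one_lt_card.mp hR
  obtain ⟨w, hwa, hwb, hw⟩ : ∃ w, w ≠ a ∧ w ≠ b ∧ ¬(G.Adj a w ↔ G.Adj b w) := by
    by_contra! h
    exact hW.pairwise_not_twinEq ha hb hab (Or.inr h)
  obtain ⟨A, hAR, hA, c, hAc⟩ := exists_large_subset_forall_iff (R.erase w) (G.Adj · w)
  obtain ⟨u, huR, huw, hu⟩ : ∃ u ∈ R, u ≠ w ∧ ¬(G.Adj u w ↔ c) := by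
    by_cases h : G.Adj a w ↔ c
    · exact ⟨b, hb, hwb.symm, fun h' => hw (h.trans h'.symm)⟩
    · exact ⟨a, ha, hwa.symm, h⟩
  obtain ⟨R', hR'A, hR', d, hR'd⟩ := exists_large_subset_forall_iff A (G.Adj · u)
  have huR' : u ∉ R' := fun h => hu (hAc u (hR'A h))
  have hR'R : R' ⊆ R := hR'A.trans (hAR.trans (Finset.erase_subset w R))
  refine ⟨u, w, R', hW.snoc hR'R huR huR' (fun h => Finset.notMem_erase w R (hAR (hR'A h)))
    huw (fun i h => hw (h ▸ hW.isHomogeneous_x i a ha b hb))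
    (fun r hr s hs => (hR'd r hr).trans (hR'd s hs).symm)
    (fun r hr s hs => (hAc r (hR'A hr)).trans (hAc s (hR'A hs)).symm)
    (fun r hr h => hu (h.trans (hAc r (hR'A hr)))), ?_, ?_⟩
  · have := Finset.pred_card_le_card_erase (s := R) (a := w)
    omega
  · exact Finset.card_lt_card ((Finset.ssubset_iff_of_subset hR'R).mpr ⟨u, huR, huR'⟩)

theorem card_lt (hW : TwinWitness G x z R) : R.card < 4 ^ (maxCutRank G + 1 - t) := by
  induction hn : R.card using Nat.strong_induction_on generalizing t x z R with
  | _ n ih =>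
  obtain hR | ⟨r, hr⟩ := R.eq_empty_or_nonempty
  · subst hR hn
    exact pow_pos (by norm_num) _
  obtain ⟨e, he⟩ : ∃ e, maxCutRank G + 1 - t = e + 1 :=
    ⟨maxCutRank G - t, by have := hW.le_maxCutRank hr; omega⟩
  have hpos := Nat.one_le_pow e 4 (by norm_num)
  rw [he, pow_succ]
  rcases lt_or_ge R.card 2 with hR | hR
  · omega
  obtain ⟨b, w, R', hW', hR', hR'R⟩ := hW.exists_snoc hR
  have ih' := ih R'.card (hn ▸ hR'R) hW' rfl
  rw [show maxCutRank G + 1 - (t + 1) = e by omega] at ih'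
  omega

end TwinWitness

end Greedy

/-- For every graph, `nd(G) < 2^(2·maxρ(G) + 2)`. -/
theorem stmt15 {V : Type} [Fintype V] [DecidableEq V] (G : SimpleGraph V) :
    nd G < 2 ^ (2 * maxCutRank G + 2) := by
  obtain ⟨R, hR, hpairwise⟩ := exists_pairwise_not_twinEq_card_eq_nd G
  have hW : TwinWitness G (Fin.elim0 : Fin 0 → V) Fin.elim0 R :=
    ⟨nofun, nofun, nofun, nofun, nofun, nofun, nofun, hpairwise⟩
  calc nd G = R.card := hR.symm
    _ < 4 ^ (maxCutRank G + 1 - 0) := hW.card_lt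
    _ = 2 ^ (2 * maxCutRank G + 2) := by
      rw [Nat.sub_zero, show (4 : ℕ) = 2 ^ 2 by norm_num, ← pow_mul]
      ring_nf

end AvgCutRank
end
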